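/- arXiv:2310.13835 — 5 statements merged into one kernel-verified Lean document; each statement's English description precedes it below -/
import Mathlib

section
/- Let R be a saturated transfer system on a finite modular lattice M, and suppose x, y ∈ M are both covered by x ∨ y and both cover x ∧ y (a covering diamond). If three of the four covering relations among x ∧ y, x, y, x ∨ y belong to R, then so does the fourth. -/
/-- A transfer system on a lattice `M`: a partial order refining `≤`
(reflexive, transitive, and refining `≤`, hence antisymmetric) that is
closed under restriction. -/
structure TransferSystem (M : Type*) [Lattice M] where
  rel : M → M → Prop
  refl : ∀ x, rel x x
  trans : ∀ x y z, rel x y → rel y z → rel x z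
  le_of_rel : ∀ x y, rel x y → x ≤ y
  restrict : ∀ x y z, rel x z → y ≤ z → rel (x ⊓ y) y

/-- A transfer system is saturated when `x R y ≤ z` and `x R z` imply `y R z`. -/
def TransferSystem.Saturated {M : Type*} [Lattice M] (R : TransferSystem M) : Prop :=
  ∀ x y z, R.rel x y → y ≤ z → R.rel x z → R.rel y z

/-- A saturated cover on a lattice: a set `Q` of covering relations closed
under restriction (condition 1) and satisfying the 3-out-of-4 rule on
covering diamonds (condition 2). -/
def IsSaturatedCover {M : Type*} [Lattice M] (Q : M → M → Prop) : Prop :=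
  (∀ x y, Q x y → x ⋖ y) ∧
  (∀ x y, Q x (x ⊔ y) → Q (x ⊓ y) y) ∧
  (∀ x y, x ⊓ y ⋖ x → x ⊓ y ⋖ y → x ⋖ x ⊔ y → y ⋖ x ⊔ y →
    (Q (x ⊓ y) x ∧ Q (x ⊓ y) y ∧ Q x (x ⊔ y) → Q y (x ⊔ y)) ∧
    (Q (x ⊓ y) x ∧ Q (x ⊓ y) y ∧ Q y (x ⊔ y) → Q x (x ⊔ y)) ∧
    (Q (x ⊓ y) x ∧ Q x (x ⊔ y) ∧ Q y (x ⊔ y) → Q (x ⊓ y) y) ∧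
    (Q (x ⊓ y) y ∧ Q x (x ⊔ y) ∧ Q y (x ⊔ y) → Q (x ⊓ y) x))

namespace TransferSystem

variable {M : Type*} [Lattice M] {R : TransferSystem M} {x y : M}

theorem rel_inf_of_rel_sup_left (h : R.rel x (x ⊔ y)) : R.rel (x ⊓ y) y :=
  R.restrict _ _ _ h le_sup_right

theorem rel_inf_of_rel_sup_right (h : R.rel y (x ⊔ y)) : R.rel (x ⊓ y) x := by
  simpa only [inf_comm] using R.restrict _ _ _ h le_sup_left

theorem Saturated.rel_of_rel_of_rel_trans {w z : M} (hsat : R.Saturated) (hwy : R.rel w y)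
    (hyz : y ≤ z) (hwx : R.rel w x) (hxz : R.rel x z) : R.rel y z :=
  hsat _ _ _ hwy hyz (R.trans _ _ _ hwx hxz)

end TransferSystem

theorem stmt9_general {M : Type*} [Lattice M]
    (R : TransferSystem M) (hsat : R.Saturated)
    (x y : M) :
    (R.rel (x ⊓ y) x ∧ R.rel (x ⊓ y) y ∧ R.rel x (x ⊔ y) → R.rel y (x ⊔ y)) ∧
    (R.rel (x ⊓ y) x ∧ R.rel (x ⊓ y) y ∧ R.rel y (x ⊔ y) → R.rel x (x ⊔ y)) ∧
    (R.rel (x ⊓ y) x ∧ R.rel x (x ⊔ y) ∧ R.rel y (x ⊔ y) → R.rel (x ⊓ y) y) ∧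
    (R.rel (x ⊓ y) y ∧ R.rel x (x ⊔ y) ∧ R.rel y (x ⊔ y) → R.rel (x ⊓ y) x) := by
  refine ⟨fun ⟨hx, hy, hxs⟩ => hsat.rel_of_rel_of_rel_trans hy le_sup_right hx hxs,
    fun ⟨hx, hy, hys⟩ => hsat.rel_of_rel_of_rel_trans hx le_sup_left hy hys,
    fun ⟨_, hxs, _⟩ => TransferSystem.rel_inf_of_rel_sup_left hxs,
    fun ⟨_, _, hys⟩ => TransferSystem.rel_inf_of_rel_sup_right hys⟩

/-- for a saturated transfer system R on a finite modular
lattice and a covering diamond on x, y, if three of the four covering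
relations among x ⊓ y, x, y, x ⊔ y belong to R, then so does the fourth. -/
theorem stmt9 {M : Type*} [Lattice M] [Finite M] [IsModularLattice M]
    (R : TransferSystem M) (hsat : R.Saturated)
    (x y : M)
    (h1 : x ⊓ y ⋖ x) (h2 : x ⊓ y ⋖ y) (h3 : x ⋖ x ⊔ y) (h4 : y ⋖ x ⊔ y) :
    (R.rel (x ⊓ y) x ∧ R.rel (x ⊓ y) y ∧ R.rel x (x ⊔ y) → R.rel y (x ⊔ y)) ∧
    (R.rel (x ⊓ y) x ∧ R.rel (x ⊓ y) y ∧ R.rel y (x ⊔ y) → R.rel x (x ⊔ y)) ∧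
    (R.rel (x ⊓ y) x ∧ R.rel x (x ⊔ y) ∧ R.rel y (x ⊔ y) → R.rel (x ⊓ y) y) ∧
    (R.rel (x ⊓ y) y ∧ R.rel x (x ⊔ y) ∧ R.rel y (x ⊔ y) → R.rel (x ⊓ y) x) :=
  stmt9_general R hsat x y
end

section
/- Let M be a finite modular lattice, Q a saturated cover on M, and x ≤ y ≤ w ≤ z elements of M with x ⟨Q⟩ z. Then y ⟨Q⟩ w, where ⟨Q⟩ is the transfer system generated by Q. -/
/-!
Write `a ⊑ b` when `a ≤ b` and every cover inside `[a, b]` lies in `Q`. In a finite modular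
lattice `⊑` is itself a transfer system containing `Q`, hence it contains `⟨Q⟩`. So `x ⟨Q⟩ z`
puts every cover of `[y, w] ⊆ [x, z]` in `Q`, and composing the covers of a maximal chain
from `y` to `w` gives `y ⟨Q⟩ w`.
-/

section

variable {M : Type*} [Lattice M]

def AllCoversIn (Q : M → M → Prop) (a b : M) : Prop :=
  ∀ u v, a ≤ u → u ⋖ v → v ≤ b → Q u v

variable {Q : M → M → Prop} {a b c : M}

theorem AllCoversIn.mono {a' b' : M} (h : AllCoversIn Q a b) (ha : a ≤ a') (hb : b' ≤ b) :
    AllCoversIn Q a' b' :=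
  fun u v hu huv hv => h u v (ha.trans hu) huv (hv.trans hb)

theorem allCoversIn_of_covBy (hab : a ⋖ b) (h : Q a b) : AllCoversIn Q a b := by
  intro u v hau huv hvb
  obtain rfl : u = a :=
    (hab.eq_or_eq hau (huv.le.trans hvb)).resolve_right fun hub => (hub ▸ huv.lt).not_ge hvb
  obtain rfl : v = b := (hab.eq_or_eq huv.le hvb).resolve_left huv.ne'
  exact h

theorem AllCoversIn.refl (a : M) : AllCoversIn Q a a :=
  fun _ _ hu huv hv => (huv.lt.trans_le (hv.trans hu)).false.elim

theorem CovBy.sup_eq_of_not_le {v : M} (hbc : b ⋖ c) (hvc : v ≤ c) (hvb : ¬ v ≤ b) :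
    b ⊔ v = c :=
  (hbc.eq_or_eq le_sup_left (sup_le hbc.le hvc)).resolve_left
    fun h => hvb (h ▸ le_sup_right)

theorem IsSaturatedCover.inf_of_not_le {v : M} (hQ : IsSaturatedCover Q) (hbc : Q b c)
    (hvc : v ≤ c) (hvb : ¬ v ≤ b) : Q (b ⊓ v) v :=
  hQ.2.1 b v <| ((hQ.1 b c hbc).sup_eq_of_not_le hvc hvb).symm ▸ hbc

section Modular

variable [IsModularLattice M]

/-- A cover `u ⋖ v` of `[a, c]` with `u, v ≰ b` is the top edge of the covering diamond on
`u ⊓ b, u, v ⊓ b, v`, whose other three edges are in `Q`. -/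
theorem AllCoversIn.of_covBy_right (hQ : IsSaturatedCover Q) (hab : a ≤ b)
    (h : AllCoversIn Q a b) (hbc : b ⋖ c) (hQbc : Q b c) : AllCoversIn Q a c := by
  intro u v hau huv hvc
  by_cases hvb : v ≤ b
  · exact h u v hau huv hvb
  have hQv : Q (b ⊓ v) v := hQ.inf_of_not_le hQbc hvc hvb
  by_cases hub : u ≤ b
  · obtain rfl : b ⊓ v = u :=
      (huv.eq_or_eq (le_inf hub huv.le) inf_le_right).resolve_right fun e => hvb (e ▸ inf_le_left)
    exact hQv
  have hQu : Q (b ⊓ u) u := hQ.inf_of_not_le hQbc (huv.le.trans hvc) hub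
  have hbu : b ⊔ u = c := hbc.sup_eq_of_not_le (huv.le.trans hvc) hub
  have hbv : b ⊔ v = c := hbc.sup_eq_of_not_le hvc hvb
  have hinf : u ⊓ (v ⊓ b) = u ⊓ b := by rw [← inf_assoc, inf_eq_left.2 huv.le]
  have hsup : u ⊔ v ⊓ b = v := by
    rw [inf_comm v b, ← sup_inf_assoc_of_le b huv.le, sup_comm u b, hbu, inf_eq_right.2 hvc]
  have hbot : u ⊓ b ⋖ v ⊓ b := hinf ▸ inf_covBy_of_covBy_sup_left (hsup.symm ▸ huv)
  have diamond := hQ.2.2 u (v ⊓ b)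
  rw [hinf, hsup] at diamond
  refine (diamond ?_ hbot huv ?_).2.1 ⟨?_, h _ _ (le_inf hau hab) hbot inf_le_right, ?_⟩
  · simpa only [inf_comm] using inf_covBy_of_covBy_sup_left (hbu.symm ▸ hbc)
  · simpa only [inf_comm] using inf_covBy_of_covBy_sup_left (hbv.symm ▸ hbc)
  · simpa only [inf_comm] using hQu
  · simpa only [inf_comm] using hQv

theorem AllCoversIn.trans [IsStronglyAtomic M] [WellFoundedGT M] (hQ : IsSaturatedCover Q)
    (hab : a ≤ b) (hbc : b ≤ c) (h₁ : AllCoversIn Q a b) (h₂ : AllCoversIn Q b c) :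
    AllCoversIn Q a c := by
  induction b using WellFoundedGT.induction with
  | _ b ih =>
    rcases hbc.eq_or_lt with rfl | hlt
    · exact h₁
    obtain ⟨b', hbb', hb'c⟩ := exists_covBy_le_of_lt hlt
    exact ih b' hbb'.lt (hab.trans hbb'.le) hb'c
      (h₁.of_covBy_right hQ hab hbb' (h₂ b b' le_rfl hbb' hb'c)) (h₂.mono hbb'.le le_rfl)

/-- The cover `u ⋖ v` of `[a ⊓ y, y]` transposes up to the cover `u ⊔ a ⋖ v ⊔ a` of `[a, c]`. -/
theorem AllCoversIn.inf_right {y : M} (hQ : IsSaturatedCover Q) (h : AllCoversIn Q a c)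
    (hac : a ≤ c) (hyc : y ≤ c) : AllCoversIn Q (a ⊓ y) y := by
  intro u v hu huv hvy
  have hinf : (u ⊔ a) ⊓ v = u := by
    rw [sup_inf_assoc_of_le a huv.le, sup_eq_left]
    exact (inf_le_inf_left a hvy).trans hu
  have hsup : u ⊔ a ⊔ v = v ⊔ a := by
    rw [sup_right_comm, sup_eq_right.2 huv.le]
  have hcov : u ⊔ a ⋖ u ⊔ a ⊔ v := covBy_sup_of_inf_covBy_right (hinf.symm ▸ huv)
  have hQ' : Q (u ⊔ a) (u ⊔ a ⊔ v) :=
    h _ _ le_sup_right hcov (hsup ▸ sup_le (hvy.trans hyc) hac)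
  simpa only [hinf] using hQ.2.1 _ _ hQ'

end Modular

def IsSaturatedCover.transferSystem [IsModularLattice M] [IsStronglyAtomic M] [WellFoundedGT M]
    (hQ : IsSaturatedCover Q) : TransferSystem M where
  rel a b := a ≤ b ∧ AllCoversIn Q a b
  refl a := ⟨le_rfl, AllCoversIn.refl a⟩
  trans _ _ _ hab hbc := ⟨hab.1.trans hbc.1, hab.2.trans hQ hab.1 hbc.1 hbc.2⟩
  le_of_rel _ _ h := h.1
  restrict _ _ _ hac hyc := ⟨inf_le_right, hac.2.inf_right hQ hac.1 hyc⟩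

theorem TransferSystem.rel_of_allCoversIn [IsStronglyAtomic M] [WellFoundedGT M]
    (T : TransferSystem M) (hTQ : ∀ a b, Q a b → T.rel a b) (hab : a ≤ b)
    (h : AllCoversIn Q a b) : T.rel a b := by
  induction a using WellFoundedGT.induction with
  | _ a ih =>
    rcases hab.eq_or_lt with rfl | hlt
    · exact T.refl a
    obtain ⟨a', haa', ha'b⟩ := exists_covBy_le_of_lt hlt
    exact T.trans a a' b (hTQ a a' (h a a' le_rfl haa' ha'b))
      (ih a' haa'.lt ha'b (h.mono haa'.le le_rfl))

end

/-- if Q is a saturated cover on a finite modular lattice, T is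
the transfer system generated by Q (least transfer system containing Q),
x ≤ y ≤ w ≤ z, and x ⟨Q⟩ z, then y ⟨Q⟩ w. -/
theorem stmt11 {M : Type*} [Lattice M] [Finite M] [IsModularLattice M]
    (Q : M → M → Prop) (hQ : IsSaturatedCover Q)
    (T : TransferSystem M)
    (hTQ : ∀ a b, Q a b → T.rel a b)
    (hTleast : ∀ S : TransferSystem M, (∀ a b, Q a b → S.rel a b) →
        ∀ a b, T.rel a b → S.rel a b)
    (x y w z : M) (hxy : x ≤ y) (hyw : y ≤ w) (hwz : w ≤ z)
    (hxz : T.rel x z) :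
    T.rel y w := by
  have hQS : ∀ a b, Q a b → hQ.transferSystem.rel a b :=
    fun a b hab => ⟨(hQ.1 a b hab).le, allCoversIn_of_covBy (hQ.1 a b hab) hab⟩
  have hxz' : AllCoversIn Q x z := (hTleast hQ.transferSystem hQS x z hxz).2
  exact T.rel_of_allCoversIn hTQ hyw (hxz'.mono hxy hwz)
end

section
/- Let M be a finite modular lattice and Q a saturated cover on M. Then the transfer system ⟨Q⟩ generated by Q is a saturated transfer system. -/
/-!
The transfer system generated by `Q` is just the reflexive-transitive closure of `Q`: that closure
is already closed under restriction, because restricting a `Q`-cover `x ⋖ c` to `y` yields either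
an equality or the `Q`-cover `x ⊓ y ⋖ c ⊓ y` (condition 1 applied to `x` and `c ⊓ y`).

Saturation then reduces to a single step: given a `Q`-path `x → b → ⋯ → z` and a `Q`-cover
`x ⋖ a ≤ z` with `a ≠ b`, modularity makes `x, a, b, b ⊔ a` a covering diamond. Restricting the
path to `b ⊔ a ≤ z` gives a path from `b` to its cover `b ⊔ a`, hence `Q b (b ⊔ a)`; the
3-out-of-4 rule gives `Q a (b ⊔ a)`, and induction along the path from `b ⊔ a` finishes.
-/

open Relation

section Covers

variable {M : Type*} [Lattice M] {Q : M → M → Prop}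

theorem le_of_reflTransGen (hcov : ∀ x y, Q x y → x ⋖ y) {x y : M}
    (h : ReflTransGen Q x y) : x ≤ y := by
  simpa [reflTransGen_eq_self] using ReflTransGen.mono (fun a b hab => (hcov a b hab).le) x y h

theorem rel_of_reflTransGen_of_covBy (hcov : ∀ x y, Q x y → x ⋖ y) {x y : M} (hxy : x ⋖ y)
    (h : ReflTransGen Q x y) : Q x y := by
  rcases h.cases_head with rfl | ⟨c, hxc, hcy⟩
  · exact absurd hxy.lt (lt_irrefl x)
  · obtain rfl : c = y :=
      ((hxy.eq_or_eq (hcov x c hxc).le (le_of_reflTransGen hcov hcy)).resolve_left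
        (hcov x c hxc).ne')
    exact hxc

theorem eq_or_rel_inf_inf (hres : ∀ x y, Q x (x ⊔ y) → Q (x ⊓ y) y) {x c : M} (hxc : x ⋖ c)
    (hQ : Q x c) (y : M) : x ⊓ y = c ⊓ y ∨ Q (x ⊓ y) (c ⊓ y) := by
  by_cases hle : c ⊓ y ≤ x
  · exact .inl (le_antisymm (inf_le_inf_right y hxc.le) (le_inf hle inf_le_right))
  · have hsup : x ⊔ c ⊓ y = c :=
      (hxc.eq_or_eq le_sup_left (sup_le hxc.le inf_le_left)).resolve_left
        fun h => hle (h ▸ le_sup_right)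
    have hinf : x ⊓ (c ⊓ y) = x ⊓ y := by rw [← inf_assoc, inf_eq_left.mpr hxc.le]
    exact .inr (hinf ▸ hres x (c ⊓ y) (by rwa [hsup]))

theorem reflTransGen_inf_inf (hcov : ∀ x y, Q x y → x ⋖ y)
    (hres : ∀ x y, Q x (x ⊔ y) → Q (x ⊓ y) y) {x z : M} (h : ReflTransGen Q x z) (y : M) :
    ReflTransGen Q (x ⊓ y) (z ⊓ y) := by
  refine ReflTransGen.lift' (· ⊓ y) (fun a c hac => ?_) x z h
  rcases eq_or_rel_inf_inf hres (hcov a c hac) hac y with heq | hQ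
  · exact (heq ▸ .refl : ReflTransGen Q (a ⊓ y) (c ⊓ y))
  · exact .single hQ

def TransferSystem.ofCovers (hcov : ∀ x y, Q x y → x ⋖ y)
    (hres : ∀ x y, Q x (x ⊔ y) → Q (x ⊓ y) y) : TransferSystem M where
  rel := ReflTransGen Q
  refl _ := .refl
  trans _ _ _ := .trans
  le_of_rel _ _ := le_of_reflTransGen hcov
  restrict x y z hxz hyz := by
    simpa [inf_eq_right.mpr hyz] using reflTransGen_inf_inf hcov hres hxz y

theorem TransferSystem.rel_of_reflTransGen (T : TransferSystem M)
    (hQ : ∀ a b, Q a b → T.rel a b) {a b : M} (h : ReflTransGen Q a b) : T.rel a b := by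
  induction h with
  | refl => exact T.refl a
  | tail _ hbc ih => exact T.trans _ _ _ ih (hQ _ _ hbc)

end Covers

section Modular

variable {M : Type*} [Lattice M] [IsModularLattice M] {Q : M → M → Prop}

theorem IsSaturatedCover.rel_sup_of_reflTransGen (hQ : IsSaturatedCover Q) {x a b : M}
    (hxa : Q x a) (hxb : Q x b) (hab : a ≠ b) (hb : ReflTransGen Q b (b ⊔ a)) :
    Q b (b ⊔ a) ∧ Q a (b ⊔ a) := by
  have hba : b ⊓ a = x := (hQ.1 x b hxb).wcovBy.inf_eq (hQ.1 x a hxa).wcovBy (Ne.symm hab)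
  have hba_b : b ⊓ a ⋖ b := hba ▸ hQ.1 x b hxb
  have hba_a : b ⊓ a ⋖ a := hba ▸ hQ.1 x a hxa
  have hb_sup := covBy_sup_of_inf_covBy_right hba_a
  have hQb : Q b (b ⊔ a) := rel_of_reflTransGen_of_covBy hQ.1 hb_sup hb
  exact ⟨hQb, (hQ.2.2 b a hba_b hba_a hb_sup (covBy_sup_of_inf_covBy_left hba_b)).1
    ⟨hba ▸ hxb, hba ▸ hxa, hQb⟩⟩

theorem IsSaturatedCover.reflTransGen_of_rel_of_le (hQ : IsSaturatedCover Q) {x z : M}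
    (hxz : ReflTransGen Q x z) {a : M} (hxa : Q x a) (haz : a ≤ z) : ReflTransGen Q a z := by
  induction hxz using ReflTransGen.head_induction_on generalizing a with
  | refl => exact absurd haz (hQ.1 _ a hxa).lt.not_ge
  | @head x b hxb hbz ih =>
    by_cases hab : a = b
    · exact hab ▸ hbz
    have hsup : b ⊔ a ≤ z := sup_le (le_of_reflTransGen hQ.1 hbz) haz
    have hb_sup : ReflTransGen Q b (b ⊔ a) := by
      simpa [inf_eq_right.mpr hsup] using reflTransGen_inf_inf hQ.1 hQ.2.1 hbz (b ⊔ a)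
    obtain ⟨hQb, hQa⟩ := hQ.rel_sup_of_reflTransGen hxa hxb hab hb_sup
    exact .head hQa (ih hQb hsup)

theorem IsSaturatedCover.saturated_ofCovers (hQ : IsSaturatedCover Q) :
    (TransferSystem.ofCovers hQ.1 hQ.2.1).Saturated := by
  intro x y z hxy hyz hxz
  induction hxy using ReflTransGen.head_induction_on with
  | refl => exact hxz
  | @head x c hxc hcy ih =>
    exact ih (hQ.reflTransGen_of_rel_of_le hxz hxc ((le_of_reflTransGen hQ.1 hcy).trans hyz))

end Modular

theorem stmt12_general {M : Type*} [Lattice M] [IsModularLattice M]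
    (Q : M → M → Prop) (hQ : IsSaturatedCover Q)
    (T : TransferSystem M)
    (hTQ : ∀ a b, Q a b → T.rel a b)
    (hTleast : ∀ S : TransferSystem M, (∀ a b, Q a b → S.rel a b) →
        ∀ a b, T.rel a b → S.rel a b) :
    T.Saturated := by
  have hT : ∀ a b, T.rel a b ↔ ReflTransGen Q a b := fun a b =>
    ⟨hTleast (.ofCovers hQ.1 hQ.2.1) (fun _ _ => .single) a b, T.rel_of_reflTransGen hTQ⟩
  intro x y z hxy hyz hxz
  rw [hT] at hxy hxz ⊢
  exact hQ.saturated_ofCovers x y z hxy hyz hxz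

/-- the transfer system generated by a saturated cover on a
finite modular lattice is saturated. -/
theorem stmt12 {M : Type*} [Lattice M] [Finite M] [IsModularLattice M]
    (Q : M → M → Prop) (hQ : IsSaturatedCover Q)
    (T : TransferSystem M)
    (hTQ : ∀ a b, Q a b → T.rel a b)
    (hTleast : ∀ S : TransferSystem M, (∀ a b, Q a b → S.rel a b) →
        ∀ a b, T.rel a b → S.rel a b) :
    T.Saturated :=
  stmt12_general Q hQ T hTQ hTleast
end

section
/- Let M be a finite modular lattice and Q a saturated cover on M. Then Q is closed under (non-identity) restriction: if r Q t, ℓ ≤ t, and ℓ ∧ r ≠ ℓ, then (ℓ ∧ r) Q ℓ. -/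
theorem CovBy.sup_eq_of_le_of_not_le {M : Type*} [Lattice M] {a b c : M}
    (hac : a ⋖ c) (hbc : b ≤ c) (hba : ¬ b ≤ a) : a ⊔ b = c :=
  (hac.eq_or_eq le_sup_left (sup_le hac.le hbc)).resolve_left
    fun h => hba (h ▸ le_sup_right)

theorem IsSaturatedCover.inf_rel_of_rel {M : Type*} [Lattice M] {Q : M → M → Prop}
    (hQ : IsSaturatedCover Q) {r t l : M} (hrt : Q r t) (hlt : l ≤ t) (hlr : ¬ l ≤ r) :
    Q (l ⊓ r) l := by
  have hsup : r ⊔ l = t := (hQ.1 r t hrt).sup_eq_of_le_of_not_le hlt hlr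
  rw [inf_comm]
  exact hQ.2.1 r l (hsup ▸ hrt)

theorem stmt13_general {M : Type*} [Lattice M]
    (Q : M → M → Prop) (hQ : IsSaturatedCover Q)
    (r t l : M) (hrt : Q r t) (hlt : l ≤ t) (hne : l ⊓ r ≠ l) :
    Q (l ⊓ r) l :=
  hQ.inf_rel_of_rel hrt hlt fun h => hne (inf_eq_left.2 h)

/-- a saturated cover on a finite modular lattice is closed
under non-identity restriction. -/
theorem stmt13 {M : Type*} [Lattice M] [Finite M] [IsModularLattice M]
    (Q : M → M → Prop) (hQ : IsSaturatedCover Q)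
    (r t l : M) (hrt : Q r t) (hlt : l ≤ t) (hne : l ⊓ r ≠ l) :
    Q (l ⊓ r) l :=
  stmt13_general Q hQ r t l hrt hlt hne
end

section
/- Let M be a finite modular lattice. The assignments Q ↦ ⟨Q⟩ (generated transfer system) and R ↦ R_cov (set of covering relations of M contained in R) are mutually inverse bijections between the set of saturated covers on M and the set of saturated transfer systems on M. In particular, a subset Q of covering relations of M is the set of covering relations of some saturated transfer system if and only if Q is a saturated cover. -/
/-!
For a saturated cover `Q`, the transfer system it generates is explicit: `x ⟨Q⟩ y` holds iff
`x ≤ y` and every covering relation of the interval `[x, y]` lies in `Q`. Closure of this relation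
under restriction comes from condition (1) applied to the cover `a ⊔ x ⋖ b ⊔ x`, which modularity
provides. For transitivity, a cover `u ⋖ v` of `[x, z]` with `x ≤ y ≤ z` is either handled in the
same way through `[y, z]`, or it completes to a covering diamond whose other three edges have a
smaller join with `y`; by induction they lie in `Q`, and the 3-out-of-4 rule puts `u ⋖ v` in `Q`.
Saturation and `⟨Q⟩_cov = Q` can then be read off the description.

Conversely, if `R` is saturated and `x R y`, restriction and saturation put every cover of
`[x, y]` into `R`; as a finite interval is a chain of covers, `⟨R_cov⟩ = R`.
-/

section

variable {M : Type*} [Lattice M]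

def CoversIn (Q : M → M → Prop) (x y : M) : Prop :=
  ∀ a b, x ≤ a → a ⋖ b → b ≤ y → Q a b

namespace CoversIn

variable {Q : M → M → Prop} {x y z : M}

lemma self (Q : M → M → Prop) (x : M) : CoversIn Q x x :=
  fun _ _ hxa hab hbx => (hab.lt.trans_le (hbx.trans hxa)).false.elim

lemma of_covBy (hxy : x ⋖ y) (h : Q x y) : CoversIn Q x y := by
  intro a b hxa hab hby
  obtain rfl | rfl := hxy.eq_or_eq hxa (hab.le.trans hby)
  · obtain rfl | rfl := hxy.eq_or_eq hab.le hby
    · exact hab.lt.false.elim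
    · exact h
  · exact (hab.lt.not_ge hby).elim

lemma mono_left (h : CoversIn Q x z) (hxy : x ≤ y) : CoversIn Q y z :=
  fun a b hya => h a b (hxy.trans hya)

end CoversIn

namespace TransferSystem

lemma rel_of_le_of_le (R : TransferSystem M) {x y z : M} (h : R.rel x z) (hxy : x ≤ y)
    (hyz : y ≤ z) : R.rel x y := by
  simpa only [inf_eq_left.2 hxy] using R.restrict x y z h hyz

def IsGeneratedBy (S : TransferSystem M) (Q : M → M → Prop) : Prop :=
  (∀ a b, Q a b → S.rel a b) ∧
    ∀ S' : TransferSystem M, (∀ a b, Q a b → S'.rel a b) → ∀ a b, S.rel a b → S'.rel a b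

/-- The paper's `R_cov`. -/
def cov (R : TransferSystem M) (x y : M) : Prop :=
  R.rel x y ∧ x ⋖ y

lemma rel_of_coversIn [Finite M] (S : TransferSystem M) {Q : M → M → Prop}
    (hQS : ∀ a b, Q a b → S.rel a b) {x y : M} (hxy : x ≤ y) (h : CoversIn Q x y) :
    S.rel x y := by
  induction x using WellFoundedGT.induction with
  | _ x ih =>
  obtain rfl | hlt := hxy.eq_or_lt
  · exact S.refl x
  obtain ⟨t, hxt, hty⟩ := exists_covBy_le_of_lt hlt
  exact S.trans _ _ _ (hQS _ _ (h x t le_rfl hxt hty)) (ih t hxt.lt hty (h.mono_left hxt.le))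

end TransferSystem

section Modular

variable [IsModularLattice M]

lemma sup_inf_eq_of_inf_le {u v c : M} (huv : u ≤ v) (hvc : v ⊓ c ≤ u) : (u ⊔ c) ⊓ v = u := by
  rw [sup_inf_assoc_of_le c huv, inf_comm, sup_eq_left.2 hvc]

lemma CovBy.sup_of_inf_le {u v c : M} (huv : u ⋖ v) (hvc : v ⊓ c ≤ u) : u ⊔ c ⋖ v ⊔ c := by
  have h := covBy_sup_of_inf_covBy_left (a := v) (b := u ⊔ c)
    (by rwa [inf_comm, sup_inf_eq_of_inf_le huv.le hvc])
  rwa [← sup_assoc, sup_eq_left.2 huv.le] at h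

lemma CovBy.exists_diamond [IsStronglyCoatomic M] {u v y : M} (huv : u ⋖ v)
    (hvy : ¬ v ⊓ y ≤ u) (huy : ¬ u ≤ y) :
    ∃ s, u ⊓ s ⋖ u ∧ u ⊔ s = v ∧ u ⊓ y ≤ u ⊓ s ∧ s ⊔ y = u ⊓ s ⊔ y := by
  obtain ⟨t, hmt, htu⟩ := exists_le_covBy_of_lt (inf_lt_left.2 huy)
  have hut : u ⊓ (t ⊔ v ⊓ y) = t := by
    rw [inf_comm, sup_inf_assoc_of_le _ htu.le]
    exact sup_eq_left.2 ((le_inf inf_le_right (inf_le_left.trans inf_le_right)).trans hmt)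
  have huv' : u ⊔ v ⊓ y = v :=
    (huv.eq_or_eq le_sup_left (sup_le huv.le inf_le_left)).resolve_left
      fun h => hvy (le_sup_right.trans h.le)
  refine ⟨t ⊔ v ⊓ y, by rwa [hut], ?_, by rwa [hut], ?_⟩
  · rw [← sup_assoc, sup_eq_left.2 htu.le, huv']
  · rw [hut, sup_assoc, sup_eq_right.2 (inf_le_right : v ⊓ y ≤ y)]

namespace IsSaturatedCover

variable {Q : M → M → Prop}

lemma of_sup (hQ : IsSaturatedCover Q) {u v c : M} (huv : u ≤ v) (hvc : v ⊓ c ≤ u)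
    (h : Q (u ⊔ c) (v ⊔ c)) : Q u v := by
  have h₁ := hQ.2.1 (u ⊔ c) v
  rw [sup_right_comm, sup_eq_right.2 huv, sup_inf_eq_of_inf_le huv hvc] at h₁
  exact h₁ h

lemma of_coversIn_sup (hQ : IsSaturatedCover Q) {u v c z : M} (h : CoversIn Q c z) (hcz : c ≤ z)
    (huv : u ⋖ v) (hvc : v ⊓ c ≤ u) (hvz : v ≤ z) : Q u v :=
  hQ.of_sup huv.le hvc (h _ _ le_sup_right (huv.sup_of_inf_le hvc) (sup_le hvz hcz))

lemma coversIn_inf (hQ : IsSaturatedCover Q) {x y z : M} (h : CoversIn Q x z) (hxz : x ≤ z)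
    (hyz : y ≤ z) : CoversIn Q (x ⊓ y) y :=
  fun _ _ ha hab hby =>
    hQ.of_coversIn_sup h hxz hab ((le_inf inf_le_right (inf_le_left.trans hby)).trans ha)
      (hby.trans hyz)

end IsSaturatedCover

end Modular

section FiniteModular

variable [Finite M] [IsModularLattice M] {Q : M → M → Prop}

lemma IsSaturatedCover.coversIn_trans (hQ : IsSaturatedCover Q) {x y z : M} (hxy : x ≤ y)
    (hyz : y ≤ z) (h₁ : CoversIn Q x y) (h₂ : CoversIn Q y z) : CoversIn Q x z := by
  suffices ∀ w u v, u ⊔ y = w → x ≤ u → u ⋖ v → v ≤ z → Q u v from fun u v => this _ u v rfl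
  intro w
  induction w using WellFoundedLT.induction with
  | _ w ih =>
  rintro u v rfl hxu huv hvz
  by_cases hvy : v ⊓ y ≤ u
  · exact hQ.of_coversIn_sup h₂ hyz huv hvy hvz
  by_cases huy : u ≤ y
  · have hv : v ⊓ y = v := (huv.eq_or_eq (le_inf huv.le huy) inf_le_left).resolve_left
      fun h => hvy h.le
    exact h₁ u v hxu huv (inf_eq_left.1 hv)
  obtain ⟨s, htu, rfl, hmt, hsy⟩ := huv.exists_diamond hvy huy
  have hlt : u ⊓ s ⊔ y < u ⊔ y := sup_lt_sup_of_lt_of_inf_le_inf htu.lt (le_inf hmt inf_le_right)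
  have hxt : x ≤ u ⊓ s := (le_inf hxu hxy).trans hmt
  have hts : u ⊓ s ⋖ s := inf_covBy_of_covBy_sup_left huv
  have hsv : s ⋖ u ⊔ s := covBy_sup_of_inf_covBy_left htu
  have hQtu := ih _ hlt _ u rfl hxt htu (huv.le.trans hvz)
  have hQts := ih _ hlt _ s rfl hxt hts (hsv.le.trans hvz)
  have hQsv := ih _ (hsy ▸ hlt) s _ rfl (hxt.trans hts.le) hsv hvz
  exact (hQ.2.2 u s htu hts huv hsv).2.1 ⟨hQtu, hQts, hQsv⟩

/-- The transfer system generated by a saturated cover `Q` (see `IsGeneratedBy.rel_iff`). -/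
def TransferSystem.ofSaturatedCover (hQ : IsSaturatedCover Q) : TransferSystem M where
  rel x y := x ≤ y ∧ CoversIn Q x y
  refl x := ⟨le_rfl, .self Q x⟩
  trans _ _ _ h₁ h₂ := ⟨h₁.1.trans h₂.1, hQ.coversIn_trans h₁.1 h₂.1 h₁.2 h₂.2⟩
  le_of_rel _ _ h := h.1
  restrict _ _ _ h hyz := ⟨inf_le_right, hQ.coversIn_inf h.2 h.1 hyz⟩

namespace TransferSystem.IsGeneratedBy

variable {S : TransferSystem M}

lemma rel_iff (hS : S.IsGeneratedBy Q) (hQ : IsSaturatedCover Q) {x y : M} :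
    S.rel x y ↔ x ≤ y ∧ CoversIn Q x y :=
  ⟨hS.2 (ofSaturatedCover hQ) (fun a b h => ⟨(hQ.1 a b h).le, .of_covBy (hQ.1 a b h) h⟩) x y,
    fun h => S.rel_of_coversIn hS.1 h.1 h.2⟩

lemma saturated (hS : S.IsGeneratedBy Q) (hQ : IsSaturatedCover Q) : S.Saturated := by
  intro x y z hxy hyz hxz
  rw [hS.rel_iff hQ] at hxy hxz ⊢
  exact ⟨hyz, hxz.2.mono_left hxy.1⟩

lemma rel_and_covBy_iff (hS : S.IsGeneratedBy Q) (hQ : IsSaturatedCover Q) {x y : M} :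
    S.rel x y ∧ x ⋖ y ↔ Q x y :=
  ⟨fun h => ((hS.rel_iff hQ).1 h.1).2 x y le_rfl h.2 le_rfl, fun h => ⟨hS.1 x y h, hQ.1 x y h⟩⟩

end TransferSystem.IsGeneratedBy

end FiniteModular

namespace TransferSystem

variable {R : TransferSystem M}

lemma Saturated.coversIn_cov (hR : R.Saturated) {x y : M} (h : R.rel x y) : CoversIn R.cov x y :=
  fun a b hxa hab hby =>
    have hxa' : R.rel x a := R.rel_of_le_of_le h hxa (hab.le.trans hby)
    have hxb : R.rel x b := R.rel_of_le_of_le h (hxa.trans hab.le) hby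
    ⟨hR x a b hxa' hab.le hxb, hab⟩

lemma Saturated.isSaturatedCover [IsLowerModularLattice M] (hR : R.Saturated) :
    IsSaturatedCover R.cov := by
  refine ⟨fun _ _ h => h.2, fun x y h => ⟨?_, inf_covBy_of_covBy_sup_left h.2⟩,
    fun x y h₁ h₂ h₃ h₄ => ⟨?_, ?_, ?_, ?_⟩⟩
  · simpa only [inf_comm] using R.restrict x y _ h.1 le_sup_right
  · rintro ⟨r₁, r₂, r₃⟩
    exact ⟨hR _ _ _ r₂.1 le_sup_right (R.trans _ _ _ r₁.1 r₃.1), h₄⟩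
  · rintro ⟨r₁, r₂, r₃⟩
    exact ⟨hR _ _ _ r₁.1 le_sup_left (R.trans _ _ _ r₂.1 r₃.1), h₃⟩
  · rintro ⟨r₁, r₂, -⟩
    exact ⟨R.rel_of_le_of_le (R.trans _ _ _ r₁.1 r₂.1) inf_le_right le_sup_right, h₂⟩
  · rintro ⟨r₁, -, r₃⟩
    exact ⟨R.rel_of_le_of_le (R.trans _ _ _ r₁.1 r₃.1) inf_le_left le_sup_left, h₁⟩

lemma IsGeneratedBy.rel_iff_of_saturated [Finite M] {S : TransferSystem M}
    (hS : S.IsGeneratedBy R.cov) (hR : R.Saturated) {x y : M} : S.rel x y ↔ R.rel x y :=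
  ⟨hS.2 R (fun _ _ h => h.1) x y,
    fun h => S.rel_of_coversIn hS.1 (R.le_of_rel _ _ h) (hR.coversIn_cov h)⟩

end TransferSystem

end

/-- on a finite modular lattice, Q ↦ ⟨Q⟩ and R ↦ R_cov are
mutually inverse bijections between saturated covers and saturated transfer
systems. Here `gen Q` denotes the transfer system generated by Q, i.e. the
least transfer system containing Q (on relations refining ≤). -/
theorem stmt14 {M : Type*} [Lattice M] [Finite M] [IsModularLattice M]
    (gen : (M → M → Prop) → TransferSystem M)
    (hgen : ∀ Q : M → M → Prop, (∀ a b, Q a b → a ≤ b) →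
        (∀ a b, Q a b → (gen Q).rel a b) ∧
        (∀ S : TransferSystem M, (∀ a b, Q a b → S.rel a b) →
            ∀ a b, (gen Q).rel a b → S.rel a b)) :
    (∀ Q : M → M → Prop, IsSaturatedCover Q →
        (gen Q).Saturated ∧ ∀ x y, ((gen Q).rel x y ∧ x ⋖ y) ↔ Q x y) ∧
    (∀ R : TransferSystem M, R.Saturated →
        IsSaturatedCover (fun x y => R.rel x y ∧ x ⋖ y) ∧
        ∀ x y, (gen (fun a b => R.rel a b ∧ a ⋖ b)).rel x y ↔ R.rel x y) := by
  refine ⟨fun Q hQ => ?_, fun R hR => ⟨hR.isSaturatedCover, fun x y => ?_⟩⟩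
  · have hS : (gen Q).IsGeneratedBy Q := hgen Q fun a b h => (hQ.1 a b h).le
    exact ⟨hS.saturated hQ, fun x y => hS.rel_and_covBy_iff hQ⟩
  · have hS : (gen R.cov).IsGeneratedBy R.cov := hgen R.cov fun a b h => R.le_of_rel a b h.1
    exact hS.rel_iff_of_saturated hR
end
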